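/- arXiv:1602.00078 — 2 statements merged into one kernel-verified Lean document; each statement's English description precedes it below -/
import Mathlib

section
/- Let 𝓜, 𝓝₁, 𝓝₂ be compact metric spaces equipped with a probability measure ν on 𝓜×𝓝₁×𝓝₂ that factorizes as dν(x,y,z) = dν_𝓜(x) dν_{𝓝₁|𝓜}(y|x) dν_{𝓝₂|𝓜}(z|x). Let P^{(1)}_ε be a Markov kernel on 𝓜×𝓝₁×𝓝₂ (with respect to ν) that depends only on the (𝓜×𝓝₁)-coordinates of its arguments, i.e., P^{(1)}_ε((x,y,z),(x',y',z')) = P^{(I₁)}_ε((x,y),(x',y')). Define the marginalization operator 𝓔f(x) = ∫ f(x,y,z) dν_{𝓝₁|𝓜}(y|x) dν_{𝓝₂|𝓜}(z|x) and the effective kernel P^{(e₁)}_ε(x,x') = ∫∫ P^{(I₁)}_ε((x,y),(x',y')) dν_{𝓝₁|𝓜}(y|x) dν_{𝓝₁|𝓜}(y'|x'). Then for any continuous f that is constant in the 𝓝₁-coordinate, 𝓔[D^{(1)} f](x) = ∫_𝓜 P^{(e₁)}_ε(x,x') 𝓔f(x') dν_𝓜(x'), where D^{(1)}f(x,y,z)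 = ∫ P^{(1)}_ε((x,y,z),(x',y',z')) f(x',y',z') dν(x',y',z'). -/
open MeasureTheory

/-- Single-sensor half of Theorem 1 (commutation of marginalization with
diffusion).  `M, N₁, N₂` are compact metric spaces, the probability measure on
the product factorizes as `dν = dν_M dν_{N₁|M} dν_{N₂|M}`, `P` is a Markov
kernel depending only on the `(M × N₁)`-coordinates, `Ef` is the marginalization
of `f`, `Pe` is the effective kernel and `D1f` the diffused function.  For `f`
constant in the `N₁`-coordinate, marginalizing after diffusing equals applying
the effective diffusion on `M` to the marginalized function. -/
theorem stmt_8 {M N₁ N₂ : Type*}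
    [MetricSpace M] [CompactSpace M] [MeasurableSpace M] [BorelSpace M]
    [MetricSpace N₁] [CompactSpace N₁] [MeasurableSpace N₁] [BorelSpace N₁]
    [MetricSpace N₂] [CompactSpace N₂] [MeasurableSpace N₂] [BorelSpace N₂]
    (νM : Measure M) [IsProbabilityMeasure νM]
    (ν₁ : M → Measure N₁) (ν₂ : M → Measure N₂)
    (hν₁ : ∀ x, IsProbabilityMeasure (ν₁ x)) (hν₂ : ∀ x, IsProbabilityMeasure (ν₂ x))
    (hν₁meas : Measurable ν₁) (hν₂meas : Measurable ν₂)
    (P : (M × N₁) → (M × N₁) → ℝ)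
    (hPcont : Continuous (Function.uncurry P))
    (hPnonneg : ∀ a b, 0 ≤ P a b)
    (hPmarkov : ∀ a, (∫ x', ∫ y', P a (x', y') ∂(ν₁ x') ∂νM) = 1)
    (f : M × N₁ × N₂ → ℝ) (hf : Continuous f)
    (hconst : ∀ x y y' z, f (x, y, z) = f (x, y', z))
    (Ef : M → ℝ)
    (hEf : ∀ x, Ef x = ∫ y, ∫ z, f (x, y, z) ∂(ν₂ x) ∂(ν₁ x))
    (Pe : M → M → ℝ)
    (hPe : ∀ x x', Pe x x' = ∫ y, ∫ y', P (x, y) (x', y') ∂(ν₁ x') ∂(ν₁ x))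
    (D1f : M × N₁ × N₂ → ℝ)
    (hD1f : ∀ x y z, D1f (x, y, z) =
      ∫ x', ∫ y', ∫ z', P (x, y) (x', y') * f (x', y', z') ∂(ν₂ x') ∂(ν₁ x') ∂νM) :
    ∀ x, (∫ y, ∫ z, D1f (x, y, z) ∂(ν₂ x) ∂(ν₁ x)) =
      ∫ x', Pe x x' * Ef x' ∂νM := by
  intro x
  haveI := hν₁ x
  -- nonemptiness
  have hneN₁ : Nonempty N₁ := by
    by_contra h
    rw [not_nonempty_iff] at h
    have h1 := (hν₁ x).measure_univ
    rw [Set.univ_eq_empty_iff.mpr h, measure_empty] at h1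
    exact zero_ne_one h1
  obtain ⟨y₀⟩ := hneN₁
  -- key: for every y', ∫ z, f (x', y', z) ∂ν₂ x' = Ef x'
  have hEf' : ∀ x' y', (∫ z, f (x', y', z) ∂(ν₂ x')) = Ef x' := by
    intro x' y'
    haveI := hν₁ x'
    rw [hEf]
    have : ∀ y, (∫ z, f (x', y, z) ∂(ν₂ x')) = ∫ z, f (x', y', z) ∂(ν₂ x') := by
      intro y
      congr 1
      funext z
      exact hconst x' y y' z
    simp_rw [this]
    simp
  -- kernels
  let κ₁ : ProbabilityTheory.Kernel M N₁ := ⟨ν₁, hν₁meas⟩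
  let κ₂ : ProbabilityTheory.Kernel M N₂ := ⟨ν₂, hν₂meas⟩
  haveI : ProbabilityTheory.IsMarkovKernel κ₁ := ⟨hν₁⟩
  haveI : ProbabilityTheory.IsMarkovKernel κ₂ := ⟨hν₂⟩
  -- measurability of Ef
  have hEfm : StronglyMeasurable Ef := by
    have h1 : Ef = fun x' => ∫ z, f (x', y₀, z) ∂(κ₂ x') :=
      funext fun x' => (hEf' x' y₀).symm
    rw [h1]
    refine StronglyMeasurable.integral_kernel_prod_right ?_
    exact (hf.comp (continuous_fst.prodMk
      (continuous_const.prodMk continuous_snd))).stronglyMeasurable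
  -- measurability of the inner-kernel integral as a function on N₁ × M
  have hgm : StronglyMeasurable (fun p : N₁ × M =>
      ∫ y', P (x, p.1) (p.2, y') ∂(ν₁ p.2)) := by
    let κ' : ProbabilityTheory.Kernel (N₁ × M) N₁ := κ₁.comap Prod.snd measurable_snd
    have h1 : StronglyMeasurable (Function.uncurry fun (p : N₁ × M) (y' : N₁) =>
        P (x, p.1) (p.2, y')) :=
      (hPcont.comp ((continuous_const.prodMk
        (continuous_fst.comp continuous_fst)).prodMk
        ((continuous_snd.comp continuous_fst).prodMk continuous_snd))).stronglyMeasurable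
    exact h1.integral_kernel_prod_right (κ := κ')
  -- bounds
  obtain ⟨Cp, hCp⟩ := isCompact_univ.exists_bound_of_continuousOn hPcont.continuousOn
  obtain ⟨Cf, hCf⟩ := isCompact_univ.exists_bound_of_continuousOn hf.continuousOn
  have hCp' : ∀ a b, ‖P a b‖ ≤ Cp := fun a b => hCp (a, b) trivial
  have hCf' : ∀ a, ‖f a‖ ≤ Cf := fun a => hCf a trivial
  have hCpnn : 0 ≤ Cp := le_trans (norm_nonneg _) (hCp' (x, y₀) (x, y₀))
  have hEfb : ∀ x', ‖Ef x'‖ ≤ Cf := by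
    intro x'
    haveI := hν₂ x'
    rw [← hEf' x' y₀]
    calc ‖∫ z, f (x', y₀, z) ∂(ν₂ x')‖
        ≤ Cf * ((ν₂ x') Set.univ).toReal :=
          norm_integral_le_of_norm_le_const (Filter.Eventually.of_forall fun z => hCf' _)
      _ = Cf := by simp
  have hgb : ∀ p : N₁ × M, ‖∫ y', P (x, p.1) (p.2, y') ∂(ν₁ p.2)‖ ≤ Cp := by
    intro p
    haveI := hν₁ p.2
    calc ‖∫ y', P (x, p.1) (p.2, y') ∂(ν₁ p.2)‖
        ≤ Cp * ((ν₁ p.2) Set.univ).toReal :=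
          norm_integral_le_of_norm_le_const (Filter.Eventually.of_forall fun y' => hCp' _ _)
      _ = Cp := by simp
  -- integrability for Fubini
  have hint : Integrable (Function.uncurry fun (y : N₁) (x' : M) =>
      (∫ y', P (x, y) (x', y') ∂(ν₁ x')) * Ef x') ((ν₁ x).prod νM) := by
    refine (integrable_const (Cp * Cf)).mono' ?_ (ae_of_all _ ?_)
    · exact (hgm.mul (hEfm.comp_measurable measurable_snd)).aestronglyMeasurable
    · intro p
      calc ‖(∫ y', P (x, p.1) (p.2, y') ∂(ν₁ p.2)) * Ef p.2‖
          = ‖∫ y', P (x, p.1) (p.2, y') ∂(ν₁ p.2)‖ * ‖Ef p.2‖ := norm_mul _ _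
        _ ≤ Cp * Cf := mul_le_mul (hgb p) (hEfb p.2) (norm_nonneg _) hCpnn
  -- main computation
  have step1 : ∀ y : N₁, (∫ z, D1f (x, y, z) ∂(ν₂ x)) =
      ∫ x', (∫ y', P (x, y) (x', y') ∂(ν₁ x')) * Ef x' ∂νM := by
    intro y
    haveI := hν₂ x
    simp_rw [hD1f, integral_const_mul, hEf', integral_mul_const]
    simp
  calc (∫ y, ∫ z, D1f (x, y, z) ∂(ν₂ x) ∂(ν₁ x))
      = ∫ y, ∫ x', (∫ y', P (x, y) (x', y') ∂(ν₁ x')) * Ef x' ∂νM ∂(ν₁ x) := by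
        simp_rw [step1]
    _ = ∫ x', ∫ y, (∫ y', P (x, y) (x', y') ∂(ν₁ x')) * Ef x' ∂(ν₁ x) ∂νM :=
        integral_integral_swap hint
    _ = ∫ x', Pe x x' * Ef x' ∂νM := by
        congr 1
        funext x'
        rw [integral_mul_const, ← hPe]
end

section
/- In the setting of Theorem 1 (common manifold model with conditionally independent nuisance variables and sensor-specific Markov kernels), fix (x,y,z) ∈ 𝓜×𝓝₁×𝓝₂ and let f be a continuous function on 𝓜×𝓝₁×𝓝₂ that is constant in the 𝓝₁-coordinate. Then the observable alternating diffusion starting from the first sensor satisfies Df(x,y,z) = ∫_𝓜 [∫_𝓜 P^{(𝓝₂,z)}_ε(x,x') P^{(e₁)}_ε(x',x'') dν_𝓜(x')] 𝓔f(x'') dν_𝓜(x''), where P^{(𝓝₂,z)}_ε(x,x') = ∫_{𝓝₂} P^{(I₂)}_ε((x,z),(x',z')) dν_{𝓝₂|𝓜}(z'|x') appropriately normalized, P^{(e₁)}_ε is the effective diffusion kernel of the first sensor, and 𝓔 is the marginalization operator. -/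
open MeasureTheory

lemma norm_int_le_aux {α : Type*} [MeasurableSpace α] (μ : Measure α) [IsProbabilityMeasure μ]
    {h : α → ℝ} {C : ℝ} (hb : ∀ a, ‖h a‖ ≤ C) : ‖∫ a, h a ∂μ‖ ≤ C := by
  calc ‖∫ a, h a ∂μ‖ ≤ C * (μ Set.univ).toReal :=
        norm_integral_le_of_norm_le_const (Filter.Eventually.of_forall hb)
    _ = C := by simp

lemma int_bdd_aux {α : Type*} [MeasurableSpace α] (μ : Measure α) [IsFiniteMeasure μ]
    {h : α → ℝ} (hm : AEStronglyMeasurable h μ) {C : ℝ} (hb : ∀ a, ‖h a‖ ≤ C) :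
    Integrable h μ :=
  (integrable_const C).mono' hm (Filter.Eventually.of_forall hb)

/-- Theorem 2 of the paper.  In the common manifold model with conditionally
independent nuisance variables and sensor-specific Markov kernels, for a fixed
`(x, y, z)` and a continuous `f` constant in the `N₁`-coordinate, the observable
alternating diffusion starting from the first sensor satisfies
`Df(x,y,z) = ∫ [∫ P^{(N₂,z)}(x,x') P^{(e₁)}(x',x'') dν_M(x')] 𝓔f(x'') dν_M(x'')`,
where `P^{(N₂,z)}(x,x') = ∫ P^{(I₂)}((x,z),(x',z')) dν_{N₂|M}(z'|x')` and
`P^{(e₁)}` is the effective kernel of the first sensor. -/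
theorem stmt_10 {M N₁ N₂ : Type*}
    [MetricSpace M] [CompactSpace M] [MeasurableSpace M] [BorelSpace M]
    [MetricSpace N₁] [CompactSpace N₁] [MeasurableSpace N₁] [BorelSpace N₁]
    [MetricSpace N₂] [CompactSpace N₂] [MeasurableSpace N₂] [BorelSpace N₂]
    (νM : Measure M) [IsProbabilityMeasure νM]
    (ν₁ : M → Measure N₁) (ν₂ : M → Measure N₂)
    (hν₁ : ∀ x, IsProbabilityMeasure (ν₁ x)) (hν₂ : ∀ x, IsProbabilityMeasure (ν₂ x))
    (hν₁meas : Measurable ν₁) (hν₂meas : Measurable ν₂)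
    (P1 : (M × N₁) → (M × N₁) → ℝ) (P2 : (M × N₂) → (M × N₂) → ℝ)
    (hP1cont : Continuous (Function.uncurry P1))
    (hP2cont : Continuous (Function.uncurry P2))
    (hP1nonneg : ∀ a b, 0 ≤ P1 a b) (hP2nonneg : ∀ a b, 0 ≤ P2 a b)
    (hP1markov : ∀ a, (∫ x', ∫ y', P1 a (x', y') ∂(ν₁ x') ∂νM) = 1)
    (hP2markov : ∀ a, (∫ x', ∫ z', P2 a (x', z') ∂(ν₂ x') ∂νM) = 1)
    (f : M × N₁ × N₂ → ℝ) (hf : Continuous f)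
    (hconst : ∀ x y y' z, f (x, y, z) = f (x, y', z))
    -- marginalization operator
    (Ef : M → ℝ)
    (hEf : ∀ x, Ef x = ∫ y, ∫ z, f (x, y, z) ∂(ν₂ x) ∂(ν₁ x))
    -- nuisance-dependent kernel on the common manifold (second sensor, fixed z)
    (PN2 : N₂ → M → M → ℝ)
    (hPN2 : ∀ z x x', PN2 z x x' = ∫ z', P2 (x, z) (x', z') ∂(ν₂ x'))
    -- effective kernel of the first sensor
    (Pe1 : M → M → ℝ)
    (hPe1 : ∀ x x', Pe1 x x' = ∫ y, ∫ y', P1 (x, y) (x', y') ∂(ν₁ x') ∂(ν₁ x))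
    -- observable alternating diffusion Df = D²(D¹f)
    (D1f : M × N₁ × N₂ → ℝ)
    (hD1f : ∀ x y z, D1f (x, y, z) =
      ∫ x', ∫ y', ∫ z', P1 (x, y) (x', y') * f (x', y', z') ∂(ν₂ x') ∂(ν₁ x') ∂νM)
    (Df : M × N₁ × N₂ → ℝ)
    (hDf : ∀ x y z, Df (x, y, z) =
      ∫ x', ∫ y', ∫ z', P2 (x, z) (x', z') * D1f (x', y', z') ∂(ν₂ x') ∂(ν₁ x') ∂νM)
    (x : M) (y : N₁) (z : N₂) :
    Df (x, y, z) =
      ∫ x'', (∫ x', PN2 z x x' * Pe1 x' x'' ∂νM) * Ef x'' ∂νM := by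
  classical
  -- kernels
  let κ₁ : ProbabilityTheory.Kernel M N₁ := ⟨ν₁, hν₁meas⟩
  let κ₂ : ProbabilityTheory.Kernel M N₂ := ⟨ν₂, hν₂meas⟩
  haveI : ProbabilityTheory.IsMarkovKernel κ₁ := ⟨hν₁⟩
  haveI : ProbabilityTheory.IsMarkovKernel κ₂ := ⟨hν₂⟩
  -- the function `f` depends only on the first and third coordinates
  set g : M → N₂ → ℝ := fun a c => f (a, y, c) with hgdef
  have hg : ∀ a b c, f (a, b, c) = g a c := fun a b c => hconst a b y c
  have hgcont : Continuous fun p : M × N₂ => g p.1 p.2 :=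
    hf.comp (continuous_fst.prodMk (continuous_const.prodMk continuous_snd))
  -- bounds
  obtain ⟨Cf₀, hCf₀⟩ := (isCompact_univ : IsCompact (Set.univ : Set (M × N₁ × N₂))).exists_bound_of_continuousOn hf.continuousOn
  obtain ⟨C1₀, hC1₀⟩ := (isCompact_univ : IsCompact (Set.univ : Set ((M × N₁) × (M × N₁)))).exists_bound_of_continuousOn hP1cont.continuousOn
  obtain ⟨C2₀, hC2₀⟩ := (isCompact_univ : IsCompact (Set.univ : Set ((M × N₂) × (M × N₂)))).exists_bound_of_continuousOn hP2cont.continuousOn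
  set Cf : ℝ := max Cf₀ 0 with hCfdef
  set C1 : ℝ := max C1₀ 0 with hC1def
  set C2 : ℝ := max C2₀ 0 with hC2def
  have hCf : ∀ a, ‖f a‖ ≤ Cf := fun a => (hCf₀ a (Set.mem_univ a)).trans (le_max_left _ _)
  have hC1 : ∀ a b, ‖P1 a b‖ ≤ C1 := fun a b =>
    (hC1₀ (a, b) (Set.mem_univ _)).trans (le_max_left _ _)
  have hC2 : ∀ a b, ‖P2 a b‖ ≤ C2 := fun a b =>
    (hC2₀ (a, b) (Set.mem_univ _)).trans (le_max_left _ _)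
  have hCf0 : 0 ≤ Cf := le_max_right _ _
  have hC10 : 0 ≤ C1 := le_max_right _ _
  have hC20 : 0 ≤ C2 := le_max_right _ _
  -- `Ef` as a single integral
  have hEf' : ∀ x₀, Ef x₀ = ∫ z', g x₀ z' ∂(ν₂ x₀) := by
    intro x₀
    rw [hEf]
    have h1 : ∀ y' : N₁, (∫ z', f (x₀, y', z') ∂(ν₂ x₀)) = ∫ z', g x₀ z' ∂(ν₂ x₀) := by
      intro y'; simp_rw [hg]
    simp_rw [h1]
    haveI := hν₁ x₀
    simp
  -- measurability facts
  have mEf : StronglyMeasurable Ef := by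
    have : Ef = fun x₀ => ∫ z', g x₀ z' ∂(κ₂ x₀) := funext hEf'
    rw [this]
    exact StronglyMeasurable.integral_kernel_prod_right' (κ := κ₂)
      (hgcont.stronglyMeasurable)
  have hEfb : ∀ x₀, ‖Ef x₀‖ ≤ Cf := by
    intro x₀
    rw [hEf' x₀]
    haveI := hν₂ x₀
    exact norm_int_le_aux (ν₂ x₀) fun z' => hCf _
  -- inner averaged kernel of sensor 1
  have mA : StronglyMeasurable fun q : (M × N₁) × M =>
      ∫ y'', P1 q.1 (q.2, y'') ∂(ν₁ q.2) := by
    have hsm : StronglyMeasurable fun r : ((M × N₁) × M) × N₁ => P1 r.1.1 (r.1.2, r.2) :=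
      (hP1cont.comp
        ((continuous_fst.comp continuous_fst).prodMk
          ((continuous_snd.comp continuous_fst).prodMk continuous_snd))).stronglyMeasurable
    exact StronglyMeasurable.integral_kernel_prod_right'
      (κ := κ₁.comap Prod.snd measurable_snd) hsm
  have hAb : ∀ (a : M × N₁) (x'' : M), ‖∫ y'', P1 a (x'', y'') ∂(ν₁ x'')‖ ≤ C1 := by
    intro a x''
    haveI := hν₁ x''
    exact norm_int_le_aux (ν₁ x'') fun y'' => hC1 _ _
  -- measurability of Pe1
  have mPe1 : StronglyMeasurable fun p : M × M => Pe1 p.1 p.2 := by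
    have h0 : StronglyMeasurable fun r : (M × M) × N₁ =>
        ∫ y'', P1 (r.1.1, r.2) (r.1.2, y'') ∂(ν₁ r.1.2) :=
      mA.comp_measurable
        (((measurable_fst.fst.prodMk measurable_snd).prodMk measurable_fst.snd))
    have h1 : StronglyMeasurable fun p : M × M =>
        ∫ yy, ∫ y'', P1 (p.1, yy) (p.2, y'') ∂(ν₁ p.2) ∂(ν₁ p.1) :=
      StronglyMeasurable.integral_kernel_prod_right'
        (κ := κ₁.comap (Prod.fst : M × M → M) measurable_fst) h0
    have heq : (fun p : M × M => Pe1 p.1 p.2) = fun p : M × M =>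
        ∫ yy, ∫ y'', P1 (p.1, yy) (p.2, y'') ∂(ν₁ p.2) ∂(ν₁ p.1) := by
      funext p
      exact hPe1 p.1 p.2
    rw [heq]
    exact h1
  have hPe1b : ∀ x' x'', ‖Pe1 x' x''‖ ≤ C1 := by
    intro x' x''
    rw [hPe1]
    haveI := hν₁ x'
    exact norm_int_le_aux (ν₁ x') fun yy => hAb _ _
  -- measurability of PN2
  have mPN2 : StronglyMeasurable fun x' => PN2 z x x' := by
    have : (fun x' => PN2 z x x') = fun x' => ∫ z', P2 (x, z) (x', z') ∂(κ₂ x') :=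
      funext (hPN2 z x)
    rw [this]
    exact StronglyMeasurable.integral_kernel_prod_right' (κ := κ₂)
      ((hP2cont.comp (continuous_const.prodMk continuous_id)).stronglyMeasurable)
  have hPN2b : ∀ x', ‖PN2 z x x'‖ ≤ C2 := by
    intro x'
    rw [hPN2]
    haveI := hν₂ x'
    exact norm_int_le_aux (ν₂ x') fun z' => hC2 _ _
  -- integrability for the first Fubini swap
  have I1 : ∀ x' : M, Integrable (Function.uncurry fun (y' : N₁) (x'' : M) =>
      (∫ y'', P1 (x', y') (x'', y'') ∂(ν₁ x'')) * Ef x'') ((ν₁ x').prod νM) := by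
    intro x'
    haveI := hν₁ x'
    have hm : StronglyMeasurable fun p : N₁ × M =>
        (∫ y'', P1 (x', p.1) (p.2, y'') ∂(ν₁ p.2)) * Ef p.2 :=
      (mA.comp_measurable
        (((measurable_const.prodMk measurable_fst).prodMk measurable_snd))).mul
        (mEf.comp_measurable measurable_snd)
    refine int_bdd_aux _ hm.aestronglyMeasurable (C := C1 * Cf) fun p => ?_
    simp only [Function.uncurry]
    rw [norm_mul]
    exact mul_le_mul (hAb _ _) (hEfb _) (norm_nonneg _) hC10
  -- integrability for the second Fubini swap
  have I2 : Integrable (Function.uncurry fun (x' : M) (x'' : M) =>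
      PN2 z x x' * (Pe1 x' x'' * Ef x'')) (νM.prod νM) := by
    have hm : StronglyMeasurable fun p : M × M =>
        PN2 z x p.1 * (Pe1 p.1 p.2 * Ef p.2) :=
      (mPN2.comp_measurable measurable_fst).mul
        (mPe1.mul (mEf.comp_measurable measurable_snd))
    refine int_bdd_aux _ hm.aestronglyMeasurable (C := C2 * (C1 * Cf)) fun p => ?_
    simp only [Function.uncurry]
    rw [norm_mul, norm_mul]
    exact mul_le_mul (hPN2b _)
      (mul_le_mul (hPe1b _ _) (hEfb _) (norm_nonneg _) hC10)
      (mul_nonneg (norm_nonneg _) (norm_nonneg _)) hC20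
  -- Step 1: simplify D1f
  have hD : ∀ x' y' z', D1f (x', y', z') =
      ∫ x'', (∫ y'', P1 (x', y') (x'', y'') ∂(ν₁ x'')) * Ef x'' ∂νM := by
    intro x' y' z'
    rw [hD1f]
    refine integral_congr_ae (Filter.Eventually.of_forall fun x'' => ?_)
    have h2 : ∀ y'' : N₁, (∫ z'', P1 (x', y') (x'', y'') * f (x'', y'', z'') ∂(ν₂ x''))
        = P1 (x', y') (x'', y'') * Ef x'' := by
      intro y''
      simp_rw [hg, integral_const_mul]
      rw [hEf' x'']
    simp_rw [h2]
    rw [integral_mul_const]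
  -- Step 2: integrate out z' and y'
  have step2 : ∀ x' : M,
      (∫ y', ∫ z', P2 (x, z) (x', z') * D1f (x', y', z') ∂(ν₂ x') ∂(ν₁ x'))
      = PN2 z x x' * ∫ x'', Pe1 x' x'' * Ef x'' ∂νM := by
    intro x'
    have h1 : ∀ y' : N₁, (∫ z', P2 (x, z) (x', z') * D1f (x', y', z') ∂(ν₂ x'))
        = PN2 z x x' *
          ∫ x'', (∫ y'', P1 (x', y') (x'', y'') ∂(ν₁ x'')) * Ef x'' ∂νM := by
      intro y'
      simp_rw [hD x' y']
      rw [integral_mul_const, hPN2]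
    simp_rw [h1]
    rw [integral_const_mul]
    congr 1
    rw [integral_integral_swap (I1 x')]
    refine integral_congr_ae (Filter.Eventually.of_forall fun x'' => ?_)
    simp only [integral_mul_const]
    rw [hPe1]
  -- put everything together
  rw [hDf]
  simp_rw [step2]
  have step3 : ∀ x' : M, PN2 z x x' * (∫ x'', Pe1 x' x'' * Ef x'' ∂νM)
      = ∫ x'', PN2 z x x' * (Pe1 x' x'' * Ef x'') ∂νM :=
    fun x' => (integral_const_mul _ _).symm
  simp_rw [step3]
  rw [integral_integral_swap I2]
  refine integral_congr_ae (Filter.Eventually.of_forall fun x'' => ?_)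
  simp_rw [← mul_assoc]
  simp only [integral_mul_const]
end
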